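/- arXiv:1009.2048 — 2 statements merged into one kernel-verified Lean document; each statement's English description precedes it below -/
import Mathlib

section
/- Let (Y_i)_{i=1}^n be i.i.d. with mean m and variance v, let ψ satisfy -log(1 - x + x²/2) ≤ ψ(x) ≤ log(1 + x + x²/2), let α > 0, ε ∈ (0,1), and define r(θ) = (1/(αn)) Σ ψ(α(Y_i - θ)), B₊(θ) = m - θ + (α/2)(v + (m-θ)²) + log(ε⁻¹)/(nα), B₋(θ) = m - θ - (α/2)(v + (m-θ)²) - log(ε⁻¹)/(nα). Then P[r(θ) < B₊(θ)] ≥ 1 - ε and P[r(θ) > B₋(θ)] ≥ 1 - ε. -/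
/-!
Since `ψ(x) ≤ log (1 + x + x²/2)` and `-ψ(x) ≤ log (1 - x + x²/2)`, each factor
`exp (± ψ (α (Yᵢ - θ)))` has expectation at most `1 ± α (m - θ) + (α²/2) (v + (m - θ)²)`, hence
at most `exp (± α (m - θ) + (α²/2) (v + (m - θ)²))`. Independence multiplies these bounds over the
`n` samples, and Chernoff's bound at parameter `1` turns the bound on `E[exp (± α n r(θ))]` into
tail bounds of size `ε` at the thresholds `B₊(θ)` and `B₋(θ)`.
-/

open MeasureTheory ProbabilityTheory Real

lemma exp_le_of_le_log_quadratic {s x y : ℝ} (hs : s ^ 2 < 2)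
    (h : y ≤ log (1 + s * x + x ^ 2 / 2)) : exp y ≤ 1 + s * x + x ^ 2 / 2 :=
  (le_log_iff_exp_le (by nlinarith [sq_nonneg (x + s)])).mp h

section

variable {Ω : Type*} [MeasurableSpace Ω] {μ : Measure Ω} [IsProbabilityMeasure μ]

lemma integral_sub_const_sq {Y : Ω → ℝ} (hY : MemLp Y 2 μ) (θ : ℝ) :
    ∫ ω, (Y ω - θ) ^ 2 ∂μ = Var[Y; μ] + (μ[Y] - θ) ^ 2 := by
  have hYθ : MemLp (fun ω => Y ω - θ) 2 μ := hY.sub (memLp_const θ)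
  have hmean : ∫ ω, (Y ω - θ) ∂μ = μ[Y] - θ := by
    rw [integral_sub (hY.integrable one_le_two) (integrable_const θ)]
    simp
  rw [← variance_sub_const hY.aestronglyMeasurable θ, variance_eq_sub hYθ, hmean]
  simp only [Pi.pow_apply]
  ring

lemma integrable_exp_comp_of_exp_le_quadratic {Z : Ω → ℝ} (hZ : MemLp Z 2 μ) {φ : ℝ → ℝ}
    (hφm : Measurable φ) {s : ℝ} (hφ : ∀ x, exp (φ x) ≤ 1 + s * x + x ^ 2 / 2) :
    Integrable (fun ω => exp (φ (Z ω))) μ := by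
  refine Integrable.mono' (g := fun ω => 1 + s * Z ω + Z ω ^ 2 / 2) ?_
    ((measurable_exp.comp hφm).comp_aemeasurable hZ.aemeasurable).aestronglyMeasurable
    (ae_of_all _ fun ω => ?_)
  · exact ((integrable_const 1).add ((hZ.integrable one_le_two).const_mul s)).add
      (hZ.integrable_sq.div_const 2)
  · rw [norm_of_nonneg (exp_pos _).le]
    exact hφ (Z ω)

lemma mgf_comp_le_of_exp_le_quadratic {Z : Ω → ℝ} (hZ : MemLp Z 2 μ) {φ : ℝ → ℝ}
    (hφm : Measurable φ) {s : ℝ} (hφ : ∀ x, exp (φ x) ≤ 1 + s * x + x ^ 2 / 2) :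
    mgf (fun ω => φ (Z ω)) μ 1 ≤ exp (s * μ[Z] + (∫ ω, Z ω ^ 2 ∂μ) / 2) := by
  have hZ1 : Integrable Z μ := hZ.integrable one_le_two
  have hquad : Integrable (fun ω => 1 + s * Z ω) μ := (integrable_const 1).add (hZ1.const_mul s)
  calc mgf (fun ω => φ (Z ω)) μ 1
      ≤ ∫ ω, (1 + s * Z ω + Z ω ^ 2 / 2) ∂μ := by
        simp only [mgf, one_mul]
        exact integral_mono (integrable_exp_comp_of_exp_le_quadratic hZ hφm hφ)
          (hquad.add (hZ.integrable_sq.div_const 2)) fun ω => hφ (Z ω)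
    _ = s * μ[Z] + (∫ ω, Z ω ^ 2 ∂μ) / 2 + 1 := by
        rw [integral_add hquad (hZ.integrable_sq.div_const 2),
          integral_add (integrable_const 1) (hZ1.const_mul s), integral_const_mul,
          integral_div]
        simp only [integral_const, probReal_univ, smul_eq_mul, one_mul]
        ring
    _ ≤ exp (s * μ[Z] + (∫ ω, Z ω ^ 2 ∂μ) / 2) := add_one_le_exp _

lemma measureReal_le_sum_le_exp_mul_mgf_pow {ι : Type*} [Fintype ι] {X : ι → Ω → ℝ}
    (hmeas : ∀ i, Measurable (X i)) (hindep : iIndepFun X μ) {j : ι}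
    (hident : ∀ i, IdentDistrib (X i) (X j) μ μ) (hint : Integrable (fun ω => exp (X j ω)) μ)
    (t : ℝ) :
    μ.real {ω | t ≤ ∑ i, X i ω} ≤ exp (-t) * mgf (X j) μ 1 ^ Fintype.card ι := by
  have hint_sum : Integrable (fun ω => exp (1 * (∑ i, X i) ω)) μ :=
    hindep.integrable_exp_mul_sum hmeas fun i _ => by
      simp only [one_mul]
      exact ((hident i).comp measurable_exp).integrable_iff.mpr hint
  have hmgf : mgf (∑ i, X i) μ 1 = mgf (X j) μ 1 ^ Fintype.card ι :=
    mgf_sum_of_identDistrib hmeas hindep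
      (fun i _ k _ => (hident i).trans (hident k).symm) (Finset.mem_univ j) 1
  simpa only [Finset.sum_apply, neg_one_mul, hmgf] using
    measure_ge_le_exp_mul_mgf (X := ∑ i, X i) t zero_le_one hint_sum

lemma measureReal_le_sum_comp_le_exp {ι : Type*} [Fintype ι] {Y : ι → Ω → ℝ}
    (hmeas : ∀ i, Measurable (Y i)) (hindep : iIndepFun Y μ) {j : ι}
    (hident : ∀ i, IdentDistrib (Y i) (Y j) μ μ) (hL2 : MemLp (Y j) 2 μ) {φ : ℝ → ℝ}
    (hφm : Measurable φ) {s : ℝ} (hφ : ∀ x, exp (φ x) ≤ 1 + s * x + x ^ 2 / 2) (α θ t : ℝ) :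
    μ.real {ω | t ≤ ∑ i, φ (α * (Y i ω - θ))} ≤
      exp (Fintype.card ι * (s * α * (μ[Y j] - θ) + α ^ 2 / 2 * (Var[Y j; μ] + (μ[Y j] - θ) ^ 2))
        - t) := by
  have hg : Measurable fun y => φ (α * (y - θ)) := by fun_prop
  have hZ : MemLp (fun ω => α * (Y j ω - θ)) 2 μ := (hL2.sub (memLp_const θ)).const_mul α
  have hZmean : μ[fun ω => α * (Y j ω - θ)] = α * (μ[Y j] - θ) := by
    rw [integral_const_mul, integral_sub (hL2.integrable one_le_two) (integrable_const θ)]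
    simp
  have hZsq : ∫ ω, (α * (Y j ω - θ)) ^ 2 ∂μ = α ^ 2 * (Var[Y j; μ] + (μ[Y j] - θ) ^ 2) := by
    simp_rw [mul_pow]
    rw [integral_const_mul, integral_sub_const_sq hL2]
  have hmgf := mgf_comp_le_of_exp_le_quadratic hZ hφm hφ
  rw [hZmean, hZsq] at hmgf
  refine (measureReal_le_sum_le_exp_mul_mgf_pow (X := fun i ω => φ (α * (Y i ω - θ)))
    (fun i => hg.comp (hmeas i)) (hindep.comp _ fun _ => hg) (fun i => (hident i).comp hg)
    (integrable_exp_comp_of_exp_le_quadratic hZ hφm hφ) t).trans ?_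
  calc exp (-t) * mgf (fun ω => φ (α * (Y j ω - θ))) μ 1 ^ Fintype.card ι
      ≤ exp (-t) * exp (s * (α * (μ[Y j] - θ))
          + α ^ 2 * (Var[Y j; μ] + (μ[Y j] - θ) ^ 2) / 2) ^ Fintype.card ι := by
        gcongr
        exact mgf_nonneg
    _ = _ := by
        rw [← exp_nat_mul, ← exp_add]
        ring_nf

lemma ofReal_one_sub_le_measure_of_measureReal_compl_le {s : Set Ω} {ε : ℝ}
    (h : μ.real sᶜ ≤ ε) : ENNReal.ofReal (1 - ε) ≤ μ s := by
  have hcover : 1 ≤ μ.real s + μ.real sᶜ := by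
    simpa only [Set.union_compl_self, probReal_univ] using measureReal_union_le (μ := μ) s sᶜ
  rw [← ofReal_measureReal]
  exact ENNReal.ofReal_le_ofReal (by linarith)

end

theorem stmt_3 {Ω : Type*} [MeasureSpace Ω] [IsProbabilityMeasure (ℙ : Measure Ω)]
    (n : ℕ) (hn : 0 < n) (Y : Fin n → Ω → ℝ)
    (hmeas : ∀ i, Measurable (Y i))
    (hindep : iIndepFun Y ℙ)
    (hident : ∀ i, IdentDistrib (Y i) (Y ⟨0, hn⟩) ℙ ℙ)
    (hL2 : MemLp (Y ⟨0, hn⟩) 2 ℙ)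
    (m v : ℝ) (hm : ∫ ω, Y ⟨0, hn⟩ ω ∂ℙ = m)
    (hv : ∫ ω, (Y ⟨0, hn⟩ ω - m) ^ 2 ∂ℙ = v)
    (ψ : ℝ → ℝ) (hψmeas : Measurable ψ)
    (hψ : ∀ x : ℝ, -Real.log (1 - x + x ^ 2 / 2) ≤ ψ x ∧
      ψ x ≤ Real.log (1 + x + x ^ 2 / 2))
    (α : ℝ) (hα : 0 < α) (ε : ℝ) (hε : ε ∈ Set.Ioo (0 : ℝ) 1) (θ : ℝ)
    (r : Ω → ℝ)
    (hr : ∀ ω, r ω = (1 / (α * n)) * ∑ i, ψ (α * (Y i ω - θ)))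
    (Bplus Bminus : ℝ)
    (hBplus : Bplus = m - θ + α / 2 * (v + (m - θ) ^ 2) + Real.log ε⁻¹ / (n * α))
    (hBminus : Bminus = m - θ - α / 2 * (v + (m - θ) ^ 2) - Real.log ε⁻¹ / (n * α)) :
    ℙ {ω | r ω < Bplus} ≥ ENNReal.ofReal (1 - ε) ∧
      ℙ {ω | r ω > Bminus} ≥ ENNReal.ofReal (1 - ε) := by
  have hnα : 0 < α * n := by positivity
  have hup (x : ℝ) : exp (ψ x) ≤ 1 + 1 * x + x ^ 2 / 2 :=
    exp_le_of_le_log_quadratic (by norm_num) (by simpa using (hψ x).2)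
  have hlow (x : ℝ) : exp (-ψ x) ≤ 1 + (-1) * x + x ^ 2 / 2 :=
    exp_le_of_le_log_quadratic (by norm_num) (by simpa [sub_eq_add_neg] using neg_le.mp (hψ x).1)
  have hvar : Var[Y ⟨0, hn⟩; ℙ] = v := by rw [variance_eq_integral hL2.aemeasurable, hm, hv]
  have tail := fun φ s hφm hφ t =>
    measureReal_le_sum_comp_le_exp hmeas hindep hident hL2 (φ := φ) hφm (s := s) hφ α θ t
  simp only [Fintype.card_fin, hm, hvar] at tail
  constructor
  · refine ofReal_one_sub_le_measure_of_measureReal_compl_le ?_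
    have hset : {ω | r ω < Bplus}ᶜ = {ω | α * n * Bplus ≤ ∑ i, ψ (α * (Y i ω - θ))} := by
      ext ω
      simp only [Set.mem_compl_iff, Set.mem_ofPred_eq, not_lt, hr, one_div, inv_mul_eq_div,
        le_div_iff₀ hnα, mul_comm]
    have hexp : n * (1 * α * (m - θ) + α ^ 2 / 2 * (v + (m - θ) ^ 2)) - α * n * Bplus = log ε := by
      rw [hBplus, log_inv]
      field_simp
      ring
    rw [hset]
    exact (tail ψ 1 hψmeas hup _).trans_eq (by rw [hexp, exp_log hε.1])
  · refine ofReal_one_sub_le_measure_of_measureReal_compl_le ?_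
    have hset : {ω | r ω > Bminus}ᶜ = {ω | -(α * n * Bminus) ≤ ∑ i, -ψ (α * (Y i ω - θ))} := by
      ext ω
      simp only [Set.mem_compl_iff, Set.mem_ofPred_eq, not_lt, gt_iff_lt, hr, one_div,
        inv_mul_eq_div, div_le_iff₀ hnα, mul_comm, Finset.sum_neg_distrib, neg_le_neg_iff]
    have hexp : n * (-1 * α * (m - θ) + α ^ 2 / 2 * (v + (m - θ) ^ 2)) - -(α * n * Bminus)
        = log ε := by
      rw [hBminus, log_inv]
      field_simp
      ring
    rw [hset]
    exact (tail (fun x => -ψ x) (-1) hψmeas.neg hlow _).trans_eq (by rw [hexp, exp_log hε.1])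
end

section
/- Let n ≥ 1 and ε ∈ (0, 1/(2e)]. There exists a distribution with mean m and variance v such that the empirical mean M of an i.i.d. sample of size n satisfies, with probability at least 2ε, |M - m| ≥ sqrt(v/(2nε)) (1 - 2eε/n)^{(n-1)/2}. -/
/-!
Take the symmetric three-point law `p δ_{m-a} + p δ_{m+a} + (1 - 2p) δ_m` with `a = nη` and
`2pa² = v`, so that it has mean `m` and variance `v`. With probability `n · 2p (1 - 2p)^(n-1)`
exactly one of the `n` samples differs from `m`, and then `|M - m| = a / n = η`; hence
`P(|M - m| ≥ η) ≥ (v / (nη²)) (1 - v / (n²η²))^(n-1)`. For the stated `η`, the bound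
`(1 - 2eε/n)^(n-1) ≥ (1 - 1/n)^(n-1) ≥ 1/e` gives `v / (n²η²) ≤ 2eε/n`, and the right-hand side
is then at least `2ε`.
-/

open MeasureTheory ProbabilityTheory Real

theorem exp_neg_one_le_one_sub_inv_pow (n : ℕ) : exp (-1) ≤ (1 - 1 / (n + 1 : ℝ)) ^ n := by
  rcases Nat.eq_zero_or_pos n with rfl | hn
  · simp
  have hn' : (0 : ℝ) < n := by exact_mod_cast hn
  have hbase : 1 - 1 / (n + 1 : ℝ) = (1 / (n : ℝ) + 1)⁻¹ := by field_simp; ring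
  calc exp (-1) = (exp (1 / (n : ℝ)) ^ n)⁻¹ := by
        rw [← exp_nat_mul, mul_one_div_cancel hn'.ne', exp_neg]
    _ ≤ ((1 / (n : ℝ) + 1) ^ n)⁻¹ := by
        gcongr
        exact add_one_le_exp _
    _ = (1 - 1 / (n + 1 : ℝ)) ^ n := by rw [hbase, inv_pow]

theorem exp_neg_one_le_one_sub_div_pow {n : ℕ} (hn : 1 ≤ n) {t : ℝ} (ht : t ≤ 1) :
    exp (-1) ≤ (1 - t / n) ^ (n - 1) := by
  have hn' : (1 : ℝ) ≤ n := by exact_mod_cast hn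
  have h := exp_neg_one_le_one_sub_inv_pow (n - 1)
  rw [Nat.cast_sub hn, Nat.cast_one, sub_add_cancel] at h
  refine h.trans (pow_le_pow_left₀ ?_ ?_ _)
  · exact sub_nonneg.mpr ((div_le_one (by positivity)).mpr hn')
  · gcongr

lemma sum_div_card_sub_eq_of_forall_ne {ι : Type*} [Fintype ι] {y : ι → ℝ} {m : ℝ} (i : ι)
    (h : ∀ j ≠ i, y j = m) :
    (∑ j, y j) / Fintype.card ι - m = (y i - m) / Fintype.card ι := by
  have hcard : (Fintype.card ι : ℝ) ≠ 0 := by exact_mod_cast (Fintype.card_pos_iff.mpr ⟨i⟩).ne'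
  have hsum : ∑ j, (y j - m) = y i - m :=
    Finset.sum_eq_single i (fun j _ hj => by simp [h j hj]) (by simp)
  rw [Finset.sum_sub_distrib, Finset.sum_const, Finset.card_univ, nsmul_eq_mul] at hsum
  field_simp
  linarith

noncomputable def symmThreePoint (m a p : ℝ) : Measure ℝ :=
  ENNReal.ofReal p • Measure.dirac (m - a) + ENNReal.ofReal p • Measure.dirac (m + a)
    + ENNReal.ofReal (1 - 2 * p) • Measure.dirac m

namespace symmThreePoint

variable {m a p : ℝ}

lemma isProbabilityMeasure (hp : 0 ≤ p) (hp₁ : 2 * p ≤ 1) :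
    IsProbabilityMeasure (symmThreePoint m a p) := by
  constructor
  simp only [symmThreePoint, Measure.add_apply, Measure.smul_apply, measure_univ, smul_eq_mul,
    mul_one]
  rw [← ENNReal.ofReal_add hp hp, ← ENNReal.ofReal_add (by linarith) (by linarith)]
  ring_nf
  exact ENNReal.ofReal_one

lemma integral_eq (hp : 0 ≤ p) (hp₁ : 2 * p ≤ 1) (f : ℝ → ℝ) :
    ∫ x, f x ∂symmThreePoint m a p = p * f (m - a) + p * f (m + a) + (1 - 2 * p) * f m := by
  have hint (x : ℝ) (c : ℝ) : Integrable f (ENNReal.ofReal c • Measure.dirac x) :=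
    (integrable_dirac enorm_lt_top).smul_measure ENNReal.ofReal_ne_top
  rw [symmThreePoint, integral_add_measure ((hint _ _).add_measure (hint _ _)) (hint _ _),
    integral_add_measure (hint _ _) (hint _ _)]
  simp only [integral_smul_measure, integral_dirac, ENNReal.toReal_ofReal hp,
    ENNReal.toReal_ofReal (sub_nonneg.mpr hp₁), smul_eq_mul]

lemma integral_id (hp : 0 ≤ p) (hp₁ : 2 * p ≤ 1) : ∫ x, x ∂symmThreePoint m a p = m := by
  rw [integral_eq hp hp₁ fun x => x]
  ring

lemma integral_sub_sq (hp : 0 ≤ p) (hp₁ : 2 * p ≤ 1) :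
    ∫ x, (x - m) ^ 2 ∂symmThreePoint m a p = 2 * p * a ^ 2 := by
  rw [integral_eq hp hp₁ fun x => (x - m) ^ 2]
  ring

lemma apply_center (ha : a ≠ 0) : symmThreePoint m a p {m} = ENNReal.ofReal (1 - 2 * p) := by
  simp [symmThreePoint, ha]

lemma apply_pair (ha : a ≠ 0) (hp : 0 ≤ p) :
    symmThreePoint m a p {m - a, m + a} = ENNReal.ofReal (2 * p) := by
  have hm : m ∉ ({m - a, m + a} : Set ℝ) := by simp [ha, eq_comm (a := m)]
  simp [symmThreePoint, hm, two_mul, ENNReal.ofReal_add hp hp]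

end symmThreePoint

lemma measure_pi_iUnion_pi_update {ι α : Type*} [Fintype ι] [DecidableEq ι] [MeasurableSpace α]
    (μ : Measure α) [SigmaFinite μ] {S T : Set α}
    (hST : Disjoint S T) (hS : MeasurableSet S) (hT : MeasurableSet T) :
    Measure.pi (fun _ : ι => μ) (⋃ i, Set.univ.pi (Function.update (fun _ => T) i S))
      = Fintype.card ι * (μ S * μ T ^ (Fintype.card ι - 1)) := by
  have hdisj : Pairwise (Function.onFun Disjoint
      fun i => Set.univ.pi (Function.update (fun _ : ι => T) i S)) := by
    intro i j hij
    refine Set.disjoint_left.mpr fun y hyi hyj => ?_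
    have hS' : y j ∈ S := by simpa using hyj j trivial
    have hT' : y j ∈ T := by simpa [hij.symm] using hyi j trivial
    exact Set.disjoint_left.mp hST hS' hT'
  have hmeas (i : ι) : MeasurableSet (Set.univ.pi (Function.update (fun _ : ι => T) i S)) :=
    .univ_pi fun j => by
      rcases eq_or_ne j i with rfl | hj
      · simpa using hS
      · simpa [hj] using hT
  have hprod (i : ι) : ∏ j, μ (Function.update (fun _ => T) i S j)
      = μ S * μ T ^ (Fintype.card ι - 1) := by
    simp only [Function.apply_update (fun _ => μ), Finset.prod_update_of_mem (Finset.mem_univ i),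
      Finset.prod_const, Finset.card_sdiff, Finset.card_univ]
    simp
  simp only [measure_iUnion hdisj hmeas, tsum_fintype, Measure.pi_pi, hprod, Finset.sum_const,
    Finset.card_univ, nsmul_eq_mul]

theorem exists_le_measure_pi_abs_mean_sub_ge {n : ℕ} (hn : 0 < n) (m : ℝ) {v η : ℝ}
    (hv : 0 ≤ v) (hη : 0 < η) (hvη : v ≤ n ^ 2 * η ^ 2) :
    ∃ μ : Measure ℝ, IsProbabilityMeasure μ ∧ (∫ x, x ∂μ) = m ∧ (∫ x, (x - m) ^ 2 ∂μ) = v ∧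
      ENNReal.ofReal (v / (n * η ^ 2) * (1 - v / (n ^ 2 * η ^ 2)) ^ (n - 1))
        ≤ Measure.pi (fun _ : Fin n => μ) {y | η ≤ |(∑ i, y i) / n - m|} := by
  have hn' : (0 : ℝ) < n := by exact_mod_cast hn
  set a : ℝ := n * η
  set p : ℝ := v / (2 * a ^ 2)
  have ha : 0 < a := by positivity
  have hp : 0 ≤ p := by positivity
  have h2p : 2 * p = v / (n ^ 2 * η ^ 2) := by
    simp only [p, a]
    field_simp
  have hp₁ : 2 * p ≤ 1 := h2p ▸ div_le_one_of_le₀ hvη (by positivity)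
  have hμ := symmThreePoint.isProbabilityMeasure (m := m) (a := a) hp hp₁
  refine ⟨symmThreePoint m a p, hμ, symmThreePoint.integral_id hp hp₁, ?_, ?_⟩
  · rw [symmThreePoint.integral_sub_sq hp hp₁]
    simp only [p]
    field_simp
  have hpair : Disjoint ({m - a, m + a} : Set ℝ) {m} := by
    simp [ha.ne', eq_comm (a := m)]
  have hsub : ⋃ i, Set.univ.pi (Function.update (fun _ => {m}) i {m - a, m + a})
      ⊆ {y : Fin n → ℝ | η ≤ |(∑ i, y i) / n - m|} := by
    intro y hy
    simp only [Set.mem_iUnion, Set.mem_univ_pi] at hy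
    obtain ⟨i, hy⟩ := hy
    have hyi : y i ∈ ({m - a, m + a} : Set ℝ) := by simpa using hy i
    have hrest : ∀ j ≠ i, y j = m := fun j hj => by simpa [hj] using hy j
    have hmean := sum_div_card_sub_eq_of_forall_ne i hrest
    rw [Fintype.card_fin] at hmean
    have hdev : |y i - m| = a := by
      simp only [Set.mem_insert_iff, Set.mem_singleton_iff] at hyi
      rcases hyi with h | h <;> simp [h, abs_of_pos ha]
    show η ≤ _
    rw [hmean, abs_div, hdev, Nat.abs_cast]
    exact (mul_div_cancel_left₀ η hn'.ne').ge
  calc ENNReal.ofReal (v / (n * η ^ 2) * (1 - v / (n ^ 2 * η ^ 2)) ^ (n - 1))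
      = n * (ENNReal.ofReal (2 * p) * ENNReal.ofReal (1 - 2 * p) ^ (n - 1)) := by
        rw [← ENNReal.ofReal_pow (by linarith), ← ENNReal.ofReal_mul (by positivity),
          ← ENNReal.ofReal_natCast, ← ENNReal.ofReal_mul (by positivity), h2p]
        congr 1
        field_simp
    _ = Measure.pi (fun _ : Fin n => symmThreePoint m a p)
          (⋃ i, Set.univ.pi (Function.update (fun _ => {m}) i {m - a, m + a})) := by
        rw [measure_pi_iUnion_pi_update _ hpair ((measurableSet_singleton _).insert _)
          (measurableSet_singleton _), symmThreePoint.apply_center ha.ne',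
          symmThreePoint.apply_pair ha.ne' hp, Fintype.card_fin]
    _ ≤ _ := measure_mono hsub

theorem div_sq_mul_sq_le_of_sq_eq {n : ℕ} (hn : 0 < n) {ε v c η : ℝ} (hε : 0 < ε) (hv : 0 < v)
    (hc : exp (-1) ≤ c) (hη : η ^ 2 = v / (2 * n * ε) * c) :
    v / (n ^ 2 * η ^ 2) ≤ 2 * exp 1 * ε / n := by
  have hn' : (0 : ℝ) < n := by exact_mod_cast hn
  have hc₀ : 0 < c := (exp_pos _).trans_le hc
  have hec : 1 ≤ exp 1 * c := by
    calc (1 : ℝ) = exp 1 * exp (-1) := by rw [← exp_add]; simp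
      _ ≤ exp 1 * c := by gcongr
  rw [hη, div_le_div_iff₀ (by positivity) hn']
  calc v * n = v * n * 1 := (mul_one _).symm
    _ ≤ v * n * (exp 1 * c) := by gcongr
    _ = 2 * exp 1 * ε * (n ^ 2 * (v / (2 * n * ε) * c)) := by field_simp

theorem stmt_11 (n : ℕ) (hn : 1 ≤ n) (ε : ℝ)
    (hε : ε ∈ Set.Ioc (0 : ℝ) (1 / (2 * Real.exp 1)))
    (m v : ℝ) (hv : 0 < v) :
    ∃ μ : Measure ℝ, IsProbabilityMeasure μ ∧
      (∫ x, x ∂μ) = m ∧ (∫ x, (x - m) ^ 2 ∂μ) = v ∧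
      (Measure.pi fun _ : Fin n => μ)
          {y | Real.sqrt (v / (2 * n * ε))
                * (1 - 2 * Real.exp 1 * ε / n) ^ ((n - 1 : ℝ) / 2)
              ≤ |(∑ i, y i) / n - m|}
        ≥ ENNReal.ofReal (2 * ε) := by
  obtain ⟨hε, hεe⟩ := hε
  have hn' : (0 : ℝ) < n := by exact_mod_cast hn
  have h2eε : 2 * exp 1 * ε ≤ 1 := by
    rwa [le_div_iff₀ (by positivity), mul_comm] at hεe
  set b := 1 - 2 * exp 1 * ε / n
  have hb : 0 ≤ b := sub_nonneg.mpr (div_le_one_of_le₀ (h2eε.trans (by exact_mod_cast hn)) hn'.le)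
  have hc : exp (-1) ≤ b ^ (n - 1) := exp_neg_one_le_one_sub_div_pow hn h2eε
  have hc₀ : 0 < b ^ (n - 1) := (exp_pos _).trans_le hc
  set η := sqrt (v / (2 * n * ε)) * b ^ ((n - 1 : ℝ) / 2)
  have hη_sq : η ^ 2 = v / (2 * n * ε) * b ^ (n - 1) := by
    rw [mul_pow, sq_sqrt (by positivity), ← rpow_mul_natCast hb, ← rpow_natCast, Nat.cast_sub hn]
    norm_num
  have hη : 0 < η := by
    have hη₀ : 0 ≤ η := mul_nonneg (sqrt_nonneg _) (rpow_nonneg hb _)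
    have hη_sq_pos : 0 < η ^ 2 := hη_sq ▸ by positivity
    exact hη₀.lt_of_ne fun h => hη_sq_pos.ne' (by rw [← h]; ring)
  have hq : v / (n ^ 2 * η ^ 2) ≤ 1 - b := by
    rw [sub_sub_cancel]
    exact div_sq_mul_sq_le_of_sq_eq hn hε hv hc hη_sq
  obtain ⟨μ, hμ, hmean, hvar, hprob⟩ := exists_le_measure_pi_abs_mean_sub_ge hn m hv.le hη
    (by rw [← div_le_one (by positivity)]; linarith)
  refine ⟨μ, hμ, hmean, hvar, le_trans (ENNReal.ofReal_le_ofReal ?_) hprob⟩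
  calc 2 * ε = v / (n * η ^ 2) * b ^ (n - 1) := by rw [hη_sq]; field_simp
    _ ≤ v / (n * η ^ 2) * (1 - v / (n ^ 2 * η ^ 2)) ^ (n - 1) := by
      gcongr
      linarith
end
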